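/- arXiv:1508.04296 — 6 statements merged into one kernel-verified Lean document; each statement's English description precedes it below -/
import Mathlib

section
/- Let ρ and θ be real numbers with |ρ| < 1 and θ > 0, and let z̃₀, z̃₁, z̃₂ be real numbers satisfying z̃₁ ≤ 0, z̃₂ ≤ 0 and |z̃₀| ≤ 2|ρ|√(z̃₁ z̃₂). Set z̃ = z̃₀ + z̃₁ + z̃₂ and p̃ = (1 − θ z̃₁)(1 − θ z̃₂). If z̃₁ < 0 or z̃₂ < 0, and if θ ≥ 1/4 and θ > (|ρ| + 1)/6, then |p̃² + p̃ z̃ + θ z̃₀ z̃ + (1/2 − θ) z̃²| / p̃² < 1. -/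
set_option maxHeartbeats 1000000 in
/-- Proposition 1 (stability proposition of the MCS scheme). -/
theorem mcs_stability_proposition
    (ρ θ z0 z1 z2 : ℝ) (hρ : |ρ| < 1) (hθpos : 0 < θ)
    (hz1 : z1 ≤ 0) (hz2 : z2 ≤ 0)
    (hz0 : |z0| ≤ 2 * |ρ| * Real.sqrt (z1 * z2))
    (hneg : z1 < 0 ∨ z2 < 0)
    (hθ1 : θ ≥ 1 / 4) (hθ2 : θ > (|ρ| + 1) / 6) :
    |((1 - θ * z1) * (1 - θ * z2)) ^ 2
        + ((1 - θ * z1) * (1 - θ * z2)) * (z0 + z1 + z2)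
        + θ * z0 * (z0 + z1 + z2)
        + (1 / 2 - θ) * (z0 + z1 + z2) ^ 2|
      / ((1 - θ * z1) * (1 - θ * z2)) ^ 2 < 1 := by
  have hr0 : 0 ≤ |ρ| := abs_nonneg ρ
  have ht : 0 ≤ z1 * z2 := by nlinarith [mul_nonneg (neg_nonneg.mpr hz1) (neg_nonneg.mpr hz2)]
  have hs0 : 0 ≤ Real.sqrt (z1 * z2) := Real.sqrt_nonneg _
  have hs2 : Real.sqrt (z1 * z2) ^ 2 = z1 * z2 := Real.sq_sqrt ht
  have hz0l : -(2 * |ρ| * Real.sqrt (z1 * z2)) ≤ z0 := neg_le_of_abs_le hz0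
  have hz0u : z0 ≤ 2 * |ρ| * Real.sqrt (z1 * z2) := le_of_abs_le hz0
  -- AM-GM : z1 + z2 ≤ -2s
  have hsum : z1 + z2 ≤ -(2 * Real.sqrt (z1 * z2)) := by
    nlinarith [sq_nonneg (z1 - z2), sq_nonneg (z1 + z2 + 2 * Real.sqrt (z1 * z2))]
  have hP1 : (1 : ℝ) ≤ (1 - θ * z1) * (1 - θ * z2) := by
    have h1 : (1 : ℝ) ≤ 1 - θ * z1 := by nlinarith
    have h2 : (1 : ℝ) ≤ 1 - θ * z2 := by nlinarith
    nlinarith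
  have hP2 : 0 < ((1 - θ * z1) * (1 - θ * z2)) ^ 2 := by nlinarith
  -- z < 0 and Q > 0
  have hkey : z0 + z1 + z2 < 0 ∧
      0 < (1 - θ * z1) * (1 - θ * z2) + θ * z0 + (1 / 2 - θ) * (z0 + z1 + z2) := by
    by_cases hs : Real.sqrt (z1 * z2) = 0
    · have h0 : |z0| ≤ 0 := by rw [hs] at hz0; linarith [hz0]
      have hz00 : z0 = 0 := abs_eq_zero.mp (le_antisymm h0 (abs_nonneg _))
      have hzz : z1 + z2 < 0 := by rcases hneg with h | h <;> linarith
      have ht' : z1 * z2 = 0 := by rw [← hs2, hs]; ring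
      constructor
      · rw [hz00]; linarith
      · rw [hz00]
        have htt : θ ^ 2 * (z1 * z2) = 0 := by rw [ht']; ring
        nlinarith [mul_nonneg (by linarith : (0:ℝ) ≤ 2 * θ - 1 / 2)
          (by linarith : (0:ℝ) ≤ -(z1 + z2)), htt]
    · have hspos : 0 < Real.sqrt (z1 * z2) := lt_of_le_of_ne hs0 (Ne.symm hs)
      have hzneg : z0 + z1 + z2 < 0 := by nlinarith
      refine ⟨hzneg, ?_⟩
      have h6 : 0 < 6 * θ - 1 - |ρ| := by linarith
      have hm1 : 0 ≤ (2 * θ - 1 / 2) * (-(z1 + z2) - 2 * Real.sqrt (z1 * z2)) := by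
        apply mul_nonneg <;> linarith
      have hm2 : 0 < (6 * θ - 1 - |ρ|) * Real.sqrt (z1 * z2) := mul_pos h6 hspos
      have hts : θ ^ 2 * (z1 * z2) = (θ * Real.sqrt (z1 * z2)) ^ 2 := by
        rw [mul_pow, hs2]
      nlinarith [sq_nonneg (θ * Real.sqrt (z1 * z2) - 1), hm1, hm2, hz0l, hts]
  obtain ⟨hzneg, hQpos⟩ := hkey
  rw [div_lt_one hP2, abs_lt]
  constructor
  · -- lower bound via exact SOS identity
    have h1 : (1 : ℝ) ≤ 1 + θ ^ 2 * (z1 * z2) := by nlinarith [mul_nonneg (sq_nonneg θ) ht]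
    have h2 : (1 : ℝ) ≤ 1 - 4 / 3 * θ * (z1 + z2) + θ ^ 2 * (z1 * z2) := by
      nlinarith [mul_nonneg (sq_nonneg θ) ht,
        mul_nonneg hθpos.le (by linarith : (0:ℝ) ≤ -(z1 + z2))]
    have h12 : (1 : ℝ) ≤ (1 + θ ^ 2 * (z1 * z2)) *
        (1 - 4 / 3 * θ * (z1 + z2) + θ ^ 2 * (z1 * z2)) := by
      nlinarith [mul_nonneg (by linarith : (0:ℝ) ≤ 1 + θ ^ 2 * (z1 * z2) - 1)
        (by linarith : (0:ℝ) ≤ 1 - 4 / 3 * θ * (z1 + z2) + θ ^ 2 * (z1 * z2) - 1)]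
    have hsq := sq_nonneg (z0 + 1 - (2 * θ - 1) * (z1 + z2) + θ ^ 2 * (z1 * z2))
    have hid : ((1 - θ * z1) * (1 - θ * z2)) ^ 2
        + ((1 - θ * z1) * (1 - θ * z2)) * (z0 + z1 + z2)
        + θ * z0 * (z0 + z1 + z2)
        + (1 / 2 - θ) * (z0 + z1 + z2) ^ 2
        - (-(((1 - θ * z1) * (1 - θ * z2)) ^ 2))
        = (1 / 2) * (z0 + 1 - (2 * θ - 1) * (z1 + z2) + θ ^ 2 * (z1 * z2)) ^ 2
          + (3 / 2) * ((1 + θ ^ 2 * (z1 * z2)) *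
            (1 - 4 / 3 * θ * (z1 + z2) + θ ^ 2 * (z1 * z2))) := by
      ring
    linarith [hid, hsq, h12]
  · -- upper bound: the extra part equals z * Q < 0
    have hmul : (z0 + z1 + z2) * ((1 - θ * z1) * (1 - θ * z2) + θ * z0
        + (1 / 2 - θ) * (z0 + z1 + z2)) < 0 :=
      mul_neg_of_neg_of_pos hzneg hQpos
    have hid2 : ((1 - θ * z1) * (1 - θ * z2)) ^ 2
        + ((1 - θ * z1) * (1 - θ * z2)) * (z0 + z1 + z2)
        + θ * z0 * (z0 + z1 + z2)
        + (1 / 2 - θ) * (z0 + z1 + z2) ^ 2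
        - ((1 - θ * z1) * (1 - θ * z2)) ^ 2
        = (z0 + z1 + z2) * ((1 - θ * z1) * (1 - θ * z2) + θ * z0
          + (1 / 2 - θ) * (z0 + z1 + z2)) := by ring
    linarith [hid2, hmul]
end

section
/- Let θ be a real number with θ > 1/4 and θ ≠ 1/2. Then for all real numbers w ≥ 0, |((1 + w)² θ² − (2 + w) θ + 1/2)| / ((1 + w)² θ²) < 1. -/
/-- Proposition 2, first part. -/
theorem mcs_region4_bound_of_theta_gt_quarter
    (θ : ℝ) (hθ : θ > 1 / 4) (hθ' : θ ≠ 1 / 2) :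
    ∀ w : ℝ, 0 ≤ w →
      |(1 + w) ^ 2 * θ ^ 2 - (2 + w) * θ + 1 / 2| / ((1 + w) ^ 2 * θ ^ 2) < 1 := by
  intro w hw
  have hθ0 : (0:ℝ) < θ := by linarith
  have hD : (0:ℝ) < (1 + w) ^ 2 * θ ^ 2 := by positivity
  rw [div_lt_one hD, abs_lt]
  have hne : θ - 1/2 ≠ 0 := sub_ne_zero.mpr hθ'
  have h2 : (0:ℝ) < (θ - 1/2)^2 := by positivity
  constructor
  · nlinarith [sq_nonneg (4*(1+w)^2*θ - (2+w)), mul_nonneg hw hw, sq_nonneg (1+w),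
      mul_nonneg h2.le (mul_nonneg hw hw), mul_nonneg (mul_nonneg hw hw) hw,
      mul_pos h2 hD, mul_nonneg hw h2.le, sq_nonneg (w*θ)]
  · nlinarith [mul_pos (by linarith : (0:ℝ) < 2 + w) hθ0]
end

section
/- Let θ = 1/4 or θ = 1/2. Then for all real numbers w > 0, |((1 + w)² θ² − (2 + w) θ + 1/2)| / ((1 + w)² θ²) < 1. -/
/-- Proposition 2, second part: the borderline cases θ = 1/4 and θ = 1/2. -/
theorem mcs_region4_bound_of_theta_borderline
    (θ : ℝ) (hθ : θ = 1 / 4 ∨ θ = 1 / 2) :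
    ∀ w : ℝ, 0 < w →
      |(1 + w) ^ 2 * θ ^ 2 - (2 + w) * θ + 1 / 2| / ((1 + w) ^ 2 * θ ^ 2) < 1 := by
  intro w hw
  have hden : 0 < (1 + w) ^ 2 * θ ^ 2 := by
    rcases hθ with h | h <;> subst h <;> positivity
  rw [div_lt_one hden, abs_lt]
  rcases hθ with h | h <;> subst h <;> constructor <;> nlinarith [sq_nonneg w, sq_nonneg (1+w), mul_pos hw hw]
end

section
/- Let θ be real and let z₀, z₁, z₂ be complex numbers with 1 − θ z₁ ≠ 0 and 1 − θ z₂ ≠ 0. Set z = z₀ + z₁ + z₂ and p = (1 − θ z₁)(1 − θ z₂). Let u ∈ ℂ and define successively: y₀ = (1 + z) u; y₁ the unique solution of (1 − θ z₁) y₁ = y₀ − θ z₁ u; y₂ the unique solution of (1 − θ z₂) y₂ = y₁ − θ z₂ u; ŷ₀ = y₀ + θ z₀ (y₂ − u); ỹ₀ = ŷ₀ + (1/2 − θ) z (y₂ − u); ỹ₁ the unique solution of (1 − θ z₁) ỹ₁ = ỹ₀ − θ z₁ u; and ỹ₂ the unique solution of (1 − θ z₂) ỹ₂ = ỹ₁ −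 θ z₂ u. Then ỹ₂ = R · u, where R = 1 + z/p + (θ z₀ + (1/2 − θ) z) z / p². -/
/-- Scalar (Fourier-mode) form of one step of the MCS scheme: the stage
equations yield `ỹ₂ = R u` with the amplification factor
`R = 1 + z/p + (θz₀ + (1/2 − θ)z)z/p²`. -/
theorem mcs_amplification_factor
    (θ : ℝ) (z0 z1 z2 : ℂ)
    (hp1 : 1 - (θ : ℂ) * z1 ≠ 0) (hp2 : 1 - (θ : ℂ) * z2 ≠ 0)
    (u y0 y1 y2 yh0 yt0 yt1 yt2 : ℂ)
    (hy0 : y0 = (1 + (z0 + z1 + z2)) * u)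
    (hy1 : (1 - (θ : ℂ) * z1) * y1 = y0 - (θ : ℂ) * z1 * u)
    (hy2 : (1 - (θ : ℂ) * z2) * y2 = y1 - (θ : ℂ) * z2 * u)
    (hyh0 : yh0 = y0 + (θ : ℂ) * z0 * (y2 - u))
    (hyt0 : yt0 = yh0 + ((1 / 2 : ℂ) - (θ : ℂ)) * (z0 + z1 + z2) * (y2 - u))
    (hyt1 : (1 - (θ : ℂ) * z1) * yt1 = yt0 - (θ : ℂ) * z1 * u)
    (hyt2 : (1 - (θ : ℂ) * z2) * yt2 = yt1 - (θ : ℂ) * z2 * u) :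
    yt2 = (1 + (z0 + z1 + z2) / ((1 - (θ : ℂ) * z1) * (1 - (θ : ℂ) * z2))
        + ((θ : ℂ) * z0 + ((1 / 2 : ℂ) - (θ : ℂ)) * (z0 + z1 + z2)) * (z0 + z1 + z2)
          / ((1 - (θ : ℂ) * z1) * (1 - (θ : ℂ) * z2)) ^ 2) * u := by
  set p1 := 1 - (θ : ℂ) * z1 with hP1
  set p2 := 1 - (θ : ℂ) * z2 with hP2
  set c := (θ : ℂ) * z0 + ((1 / 2 : ℂ) - (θ : ℂ)) * (z0 + z1 + z2) with hC
  set z := z0 + z1 + z2 with hZ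
  have key : (p1 * p2) ^ 2 * yt2 = ((p1 * p2) ^ 2 + p1 * p2 * z + c * z) * u := by
    linear_combination (p1 ^ 2 * p2) * hyt2 + (p1 * p2) * hyt1 + (p1 * p2) * hyt0
      + (p1 * p2) * hyh0 + (c * p1) * hy2 + c * hy1 + (c + p1 * p2) * hy0
  have hpp : p1 * p2 ≠ 0 := mul_ne_zero hp1 hp2
  have h2 : yt2 = (((p1 * p2) ^ 2 + p1 * p2 * z + c * z) * u) / (p1 * p2) ^ 2 := by
    rw [eq_div_iff (pow_ne_zero 2 hpp)]; linear_combination key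
  rw [h2]
  field_simp
end

section
/- Let θ be real and let w₀, w₁, w₂ be complex numbers with w = w₀ + w₁ + w₂. For real h near 0 define p(h) = (1 − θ h w₁)(1 − θ h w₂) and R(h) = 1 + h w / p(h) + (θ h w₀ + (1/2 − θ) h w) h w / p(h)². Then lim_{h → 0} ( R(h) − 1 − w h − (1/2) w² h² ) / h² = 0; that is, R(h) = 1 + w h + (1/2) w² h² + o(h²), so the MCS amplification factor agrees with exp(w h) up to and including second order in h. -/
open Filter Topology

/-!
Write `p(z) = (1 - θ z w₁)(1 - θ z w₂) = 1 + z u(z)` with `u(z) = -θ (w₁ + w₂) + θ² z w₁ w₂`.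
Clearing the denominator `p²`, the remainder `R(z) - (1 + w z + w² z² / 2)` becomes a polynomial
whose `z²` coefficient is `w (θ w₀ + θ (w₁ + w₂) - θ w) - θ² z w w₁ w₂`; the first part vanishes
because `w = w₀ + w₁ + w₂`, so the remainder is `z³` times a function continuous at `0`.
-/

section Algebra

variable {K : Type*} [Field K]

def mcsDenom (θ w1 w2 z : K) : K :=
  (1 - θ * z * w1) * (1 - θ * z * w2)

def mcsAmplification (θ w0 w1 w2 z : K) : K :=
  1 + z * (w0 + w1 + w2) / mcsDenom θ w1 w2 z
    + (θ * z * w0 + (1 / 2 - θ) * z * (w0 + w1 + w2)) * (z * (w0 + w1 + w2))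
      / mcsDenom θ w1 w2 z ^ 2

def mcsDenomSlope (θ w1 w2 z : K) : K :=
  -θ * (w1 + w2) + θ ^ 2 * z * (w1 * w2)

theorem mcsDenom_eq_one_add_mul_slope (θ w1 w2 z : K) :
    mcsDenom θ w1 w2 z = 1 + z * mcsDenomSlope θ w1 w2 z := by
  unfold mcsDenom mcsDenomSlope
  ring

def mcsErrorCoeff (θ w0 w1 w2 z : K) : K :=
  let w := w0 + w1 + w2
  let u := mcsDenomSlope θ w1 w2 z;
  -(θ ^ 2 * (w1 * w2) * w + w * u ^ 2 + w ^ 2 * u + w ^ 2 * z * u ^ 2 / 2)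

theorem mcsAmplification_sub_taylor [CharZero K] (θ w0 w1 w2 z : K)
    (hp : mcsDenom θ w1 w2 z ≠ 0) :
    mcsAmplification θ w0 w1 w2 z - 1 - (w0 + w1 + w2) * z - 1 / 2 * (w0 + w1 + w2) ^ 2 * z ^ 2
      = z ^ 3 * (mcsErrorCoeff θ w0 w1 w2 z / mcsDenom θ w1 w2 z ^ 2) := by
  unfold mcsAmplification mcsErrorCoeff
  rw [mcsDenom_eq_one_add_mul_slope] at hp ⊢
  field_simp
  unfold mcsDenomSlope
  ring

end Algebra

theorem tendsto_div_pow_of_eventuallyEq_pow_succ_mul {𝕜 : Type*} [NormedField 𝕜] {f g : 𝕜 → 𝕜}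
    {n : ℕ} (hg : ContinuousAt g 0) (hf : f =ᶠ[𝓝[≠] 0] fun z => z ^ (n + 1) * g z) :
    Tendsto (fun z => f z / z ^ n) (𝓝[≠] 0) (𝓝 0) := by
  have hcont : ContinuousAt (fun z => z * g z) 0 := continuousAt_id.mul hg
  have hlim : Tendsto (fun z => z * g z) (𝓝[≠] 0) (𝓝 0) := by
    simpa using hcont.tendsto.mono_left nhdsWithin_le_nhds
  refine hlim.congr' ?_
  filter_upwards [hf, self_mem_nhdsWithin] with z hfz hz
  rw [hfz, pow_succ, mul_comm (z ^ n) z, mul_assoc, mul_div_assoc,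
    mul_div_cancel_left₀ _ (pow_ne_zero n hz)]

section Analysis

variable {𝕜 : Type*} [NormedField 𝕜]

theorem continuous_mcsDenom (θ w1 w2 : 𝕜) : Continuous (mcsDenom θ w1 w2) := by
  unfold mcsDenom
  fun_prop

theorem continuous_mcsErrorCoeff (θ w0 w1 w2 : 𝕜) : Continuous (mcsErrorCoeff θ w0 w1 w2) := by
  unfold mcsErrorCoeff mcsDenomSlope
  fun_prop

theorem tendsto_mcsAmplification_sub_taylor_div_sq [CharZero 𝕜] (θ w0 w1 w2 : 𝕜) :
    Tendsto (fun z => (mcsAmplification θ w0 w1 w2 z - 1 - (w0 + w1 + w2) * z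
        - 1 / 2 * (w0 + w1 + w2) ^ 2 * z ^ 2) / z ^ 2) (𝓝[≠] 0) (𝓝 0) := by
  have hp0 : mcsDenom θ w1 w2 0 ≠ 0 := by simp [mcsDenom]
  have hp : ∀ᶠ z in 𝓝 0, mcsDenom θ w1 w2 z ≠ 0 :=
    (continuous_mcsDenom θ w1 w2).continuousAt.eventually_ne hp0
  refine tendsto_div_pow_of_eventuallyEq_pow_succ_mul
    ((continuous_mcsErrorCoeff θ w0 w1 w2).continuousAt.div
      ((continuous_mcsDenom θ w1 w2).continuousAt.pow 2) (pow_ne_zero 2 hp0)) ?_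
  filter_upwards [nhdsWithin_le_nhds hp] with z hz
  exact mcsAmplification_sub_taylor θ w0 w1 w2 z hz

end Analysis

theorem Complex.tendsto_ofReal_nhdsNE_zero : Tendsto ((↑) : ℝ → ℂ) (𝓝[≠] 0) (𝓝[≠] 0) :=
  tendsto_nhdsWithin_iff.mpr
    ⟨(continuous_ofReal.tendsto' 0 0 ofReal_zero).mono_left nhdsWithin_le_nhds,
      eventually_nhdsWithin_of_forall fun _ hx => ofReal_ne_zero.mpr hx⟩

/-- Second-order consistency of the MCS scheme: the amplification factor
`R(h)` agrees with `exp(wh)` up to and including second order in `h`. -/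
theorem mcs_second_order_consistency
    (θ : ℝ) (w0 w1 w2 : ℂ) (w : ℂ) (hw : w = w0 + w1 + w2) :
    Tendsto
      (fun h : ℝ =>
        ((1 + (h : ℂ) * w / ((1 - (θ : ℂ) * (h : ℂ) * w1) * (1 - (θ : ℂ) * (h : ℂ) * w2))
            + ((θ : ℂ) * (h : ℂ) * w0 + ((1 / 2 : ℂ) - (θ : ℂ)) * (h : ℂ) * w) * ((h : ℂ) * w)
              / ((1 - (θ : ℂ) * (h : ℂ) * w1) * (1 - (θ : ℂ) * (h : ℂ) * w2)) ^ 2)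
          - 1 - w * (h : ℂ) - (1 / 2 : ℂ) * w ^ 2 * (h : ℂ) ^ 2) / (h : ℂ) ^ 2)
      (nhdsWithin (0 : ℝ) {0}ᶜ) (nhds 0) := by
  subst hw
  exact (tendsto_mcsAmplification_sub_taylor_div_sq (θ : ℂ) w0 w1 w2).comp
    Complex.tendsto_ofReal_nhdsNE_zero
end

section
/- Let θ be real and let w₀, w₁, w₂ be complex numbers with w = w₀ + w₁ + w₂. For real h near 0 define p(h) = (1 − θ h w₁)(1 − θ h w₂) and R(h) = 1 + h w / p(h) + (θ h w₀ + (1/2 − θ) h w) h w / p(h)². Then lim_{h → 0} ( (1 − (1/2) w h)^{−2} − R(h) ) / h² = (1/4) w². -/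
open Filter

private lemma frac_lemma_rmcs (a b x c N h : ℂ) (ha : a ≠ 0) (hb : b ≠ 0) (hh : h ≠ 0)
    (hN : b^2 - a^2*b^2 - x*b*a^2 - c*a^2 = h^2 * N) :
    ((a^2)⁻¹ - (1 + x/b + c/b^2)) / h^2 = N / (a^2*b^2) := by
  have h1 : (a^2)⁻¹ - (1 + x/b + c/b^2)
      = (b^2 - a^2*b^2 - x*b*a^2 - c*a^2)/(a^2*b^2) := by
    field_simp
    ring
  rw [h1, hN, div_div, mul_comm (a^2*b^2) (h^2), ← div_div,
    mul_div_cancel_left₀ N (pow_ne_zero 2 hh)]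

/-- The difference between the amplification factor of two implicit Euler
half-steps and that of the MCS scheme is `(1/4)w²h² + o(h²)`. -/
theorem rannacher_mcs_amplification_difference
    (θ : ℝ) (w0 w1 w2 : ℂ) (w : ℂ) (hw : w = w0 + w1 + w2) :
    Tendsto
      (fun h : ℝ =>
        ((1 - (1 / 2 : ℂ) * w * (h : ℂ)) ^ (-2 : ℤ)
          - (1 + (h : ℂ) * w / ((1 - (θ : ℂ) * (h : ℂ) * w1) * (1 - (θ : ℂ) * (h : ℂ) * w2))
              + ((θ : ℂ) * (h : ℂ) * w0 + ((1 / 2 : ℂ) - (θ : ℂ)) * (h : ℂ) * w) * ((h : ℂ) * w)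
                / ((1 - (θ : ℂ) * (h : ℂ) * w1) * (1 - (θ : ℂ) * (h : ℂ) * w2)) ^ 2))
          / (h : ℂ) ^ 2)
      (nhdsWithin (0 : ℝ) {0}ᶜ) (nhds ((1 / 4 : ℂ) * w ^ 2)) := by
  have hzpow : ∀ z : ℂ, z ^ (-2 : ℤ) = (z ^ 2)⁻¹ := by
    intro z; rw [zpow_neg]; norm_cast
  set t : ℂ := (θ : ℂ) with ht
  -- the smooth quotient that agrees with the expression away from 0
  set G : ℝ → ℂ := fun h =>
    w * ((1 - t*(h:ℂ)*w1)*(1 - t*(h:ℂ)*w2)) * (t^2*w1*w2*(h:ℂ) - t*(w1+w2))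
      - (w^2/4) * ((1 - t*(h:ℂ)*w1)*(1 - t*(h:ℂ)*w2))^2
      + w^2 * ((1 - t*(h:ℂ)*w1)*(1 - t*(h:ℂ)*w2))
      - (w^3*(h:ℂ)/4) * ((1 - t*(h:ℂ)*w1)*(1 - t*(h:ℂ)*w2))
      - w * (t*w0 + (1/2 - t)*w) * (1 - w*(h:ℂ) + w^2*(h:ℂ)^2/4) with hG
  set g : ℝ → ℂ := fun h =>
    G h / ((1 - (1/2 : ℂ)*w*(h:ℂ))^2 * ((1 - t*(h:ℂ)*w1)*(1 - t*(h:ℂ)*w2))^2) with hg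
  have hGc : ContinuousAt G 0 := by fun_prop
  have hDc : ContinuousAt
      (fun h : ℝ => (1 - (1/2 : ℂ)*w*(h:ℂ))^2 * ((1 - t*(h:ℂ)*w1)*(1 - t*(h:ℂ)*w2))^2) 0 := by
    fun_prop
  have hD0 : (fun h : ℝ =>
      (1 - (1/2 : ℂ)*w*(h:ℂ))^2 * ((1 - t*(h:ℂ)*w1)*(1 - t*(h:ℂ)*w2))^2) 0 ≠ 0 := by
    simp
  have hgc : ContinuousAt g 0 := hGc.div hDc hD0
  have hg0 : g 0 = (1 / 4 : ℂ) * w ^ 2 := by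
    simp only [hg, hG, Complex.ofReal_zero, mul_zero, zero_mul, sub_zero, mul_one,
      one_pow, div_one, add_zero, zero_div]
    subst hw
    ring
  have hgt : Tendsto g (nhdsWithin (0 : ℝ) {0}ᶜ) (nhds ((1 / 4 : ℂ) * w ^ 2)) := by
    have h' := hgc.tendsto
    rw [hg0] at h'
    exact h'.mono_left nhdsWithin_le_nhds
  refine hgt.congr' ?_
  -- eventual nonvanishing of the denominators
  have e1 : ∀ᶠ h : ℝ in nhdsWithin (0 : ℝ) {0}ᶜ, (1 - (1/2 : ℂ)*w*(h:ℂ)) ≠ 0 := by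
    have hc : ContinuousAt (fun h : ℝ => (1 - (1/2 : ℂ)*w*(h:ℂ))) 0 := by fun_prop
    have h' := hc.tendsto.mono_left (nhdsWithin_le_nhds (s := {(0:ℝ)}ᶜ))
    simp only [Complex.ofReal_zero, mul_zero, sub_zero] at h'
    exact h'.eventually_ne one_ne_zero
  have e2 : ∀ᶠ h : ℝ in nhdsWithin (0 : ℝ) {0}ᶜ, (1 - t*(h:ℂ)*w1) ≠ 0 := by
    have hc : ContinuousAt (fun h : ℝ => (1 - t*(h:ℂ)*w1)) 0 := by fun_prop
    have h' := hc.tendsto.mono_left (nhdsWithin_le_nhds (s := {(0:ℝ)}ᶜ))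
    simp only [Complex.ofReal_zero, mul_zero, zero_mul, sub_zero] at h'
    exact h'.eventually_ne one_ne_zero
  have e3 : ∀ᶠ h : ℝ in nhdsWithin (0 : ℝ) {0}ᶜ, (1 - t*(h:ℂ)*w2) ≠ 0 := by
    have hc : ContinuousAt (fun h : ℝ => (1 - t*(h:ℂ)*w2)) 0 := by fun_prop
    have h' := hc.tendsto.mono_left (nhdsWithin_le_nhds (s := {(0:ℝ)}ᶜ))
    simp only [Complex.ofReal_zero, mul_zero, zero_mul, sub_zero] at h'
    exact h'.eventually_ne one_ne_zero
  have e0 : ∀ᶠ h : ℝ in nhdsWithin (0 : ℝ) {0}ᶜ, h ≠ 0 := eventually_mem_nhdsWithin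
  filter_upwards [e0, e1, e2, e3] with h h0 h1 h2 h3
  have hh : (h : ℂ) ≠ 0 := Complex.ofReal_ne_zero.mpr h0
  have hP : (1 - t*(h:ℂ)*w1)*(1 - t*(h:ℂ)*w2) ≠ 0 := mul_ne_zero h2 h3
  have hN : ((1 - t*(h:ℂ)*w1)*(1 - t*(h:ℂ)*w2))^2
      - (1 - (1/2 : ℂ)*w*(h:ℂ))^2 * ((1 - t*(h:ℂ)*w1)*(1 - t*(h:ℂ)*w2))^2
      - ((h:ℂ)*w) * ((1 - t*(h:ℂ)*w1)*(1 - t*(h:ℂ)*w2)) * (1 - (1/2 : ℂ)*w*(h:ℂ))^2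
      - ((t*(h:ℂ)*w0 + (1/2 - t)*(h:ℂ)*w) * ((h:ℂ)*w)) * (1 - (1/2 : ℂ)*w*(h:ℂ))^2
      = (h:ℂ)^2 * G h := by
    simp only [hG]
    subst hw
    ring
  rw [hzpow]
  exact (frac_lemma_rmcs _ _ _ _ _ _ h1 hP hh hN).symm
end
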